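/- Let A ∈ ℝ^{n×n} be invertible, W ∈ ℝ^{n×n} symmetric positive definite, and let S_1, …, S_r with S_i ∈ ℝ^{n×q_i} each have full column rank, with probabilities p_i > 0, Σ_{i=1}^r p_i = 1. Set Z_i := A^T S_i (S_i^T A W A^T S_i)^{-1} S_i^T A and ρ := 1 − λ_min(W^{1/2} (Σ_{i=1}^r p_i Z_i) W^{1/2}). Then 0 ≤ 1 − (Σ_{i=1}^r p_i q_i)/n ≤ ρ ≤ 1. -/

import Mathlib

/-!
Put `C_i = W^{1/2} Aᵀ S_i`. Since `C_iᵀ C_i = S_iᵀ A W Aᵀ S_i`, the matrix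
`W^{1/2} Z_i W^{1/2} = C_i (C_iᵀ C_i)⁻¹ C_iᵀ` is the orthogonal projection onto the column
space of `C_i`, which has dimension `q_i`: it is positive semidefinite with trace `q_i`. Hence
`M = W^{1/2} (∑ p_i Z_i) W^{1/2}` is positive semidefinite, so `λ_min(M) ≥ 0`, and
`n λ_min(M) ≤ tr M = ∑ p_i q_i ≤ n` because `q_i = rank S_i ≤ n`.
-/

open Matrix BigOperators

/-- The square root of a positive semidefinite matrix, as defined in the older Mathlib
(`Matrix.PosSemidef.sqrt`, removed since). -/
noncomputable def Matrix.PosSemidef.sqrt {n 𝕜 : Type*} [Fintype n] [RCLike 𝕜] [PartialOrder 𝕜] [DecidableEq n]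
    {A : Matrix n n 𝕜} (hA : A.PosSemidef) : Matrix n n 𝕜 :=
  (hA.1.eigenvectorUnitary : Matrix n n 𝕜) * diagonal (fun i => ((√(hA.1.eigenvalues i) : ℝ) : 𝕜)) *
    (star hA.1.eigenvectorUnitary : Matrix n n 𝕜)

/-- `Z = Aᵀ S (Sᵀ A W Aᵀ S)⁻¹ Sᵀ A`. -/
noncomputable def Zmat {n q : ℕ} (A W : Matrix (Fin n) (Fin n) ℝ)
    (S : Matrix (Fin n) (Fin q) ℝ) : Matrix (Fin n) (Fin n) ℝ :=
  Aᵀ * S * (Sᵀ * A * W * Aᵀ * S)⁻¹ * Sᵀ * A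

namespace Matrix

variable {m k : Type*} [Fintype k]

lemma PosSemidef.sqrt_transpose [Fintype m] [DecidableEq m] {W : Matrix m m ℝ}
    (hW : W.PosSemidef) : hW.sqrtᵀ = hW.sqrt := by
  rw [← conjTranspose_eq_transpose_of_trivial]
  simp [PosSemidef.sqrt, Matrix.mul_assoc, star_eq_conjTranspose]

lemma PosSemidef.sqrt_mul_self [Fintype m] [DecidableEq m] {W : Matrix m m ℝ}
    (hW : W.PosSemidef) : hW.sqrt * hW.sqrt = W := by
  have hU : (star hW.1.eigenvectorUnitary : Matrix m m ℝ) * hW.1.eigenvectorUnitary = 1 :=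
    Unitary.coe_star_mul_self _
  simp only [PosSemidef.sqrt, Matrix.mul_assoc]
  rw [← Matrix.mul_assoc (star _ : Matrix m m ℝ), hU, Matrix.one_mul,
    ← Matrix.mul_assoc (diagonal _), diagonal_mul_diagonal]
  conv_rhs => rw [hW.1.spectral_theorem, Unitary.conjStarAlgAut_apply, Matrix.mul_assoc]
  congr 3
  ext i
  simp [Real.mul_self_sqrt (hW.eigenvalues_nonneg i)]

lemma mulVec_injective_of_rank_eq_card {K : Type*} [Field K] (S : Matrix m k K)
    (hS : S.rank = Fintype.card k) : Function.Injective S.mulVec := by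
  have hnullity := S.mulVecLin.finrank_range_add_finrank_ker
  rw [Module.finrank_fintype_fun_eq_card, ← rank, hS] at hnullity
  have hker : Module.finrank K (LinearMap.ker S.mulVecLin) = 0 := by omega
  exact LinearMap.ker_eq_bot.mp (Submodule.finrank_eq_zero.mp hker)

section Projection

variable [Fintype m] [DecidableEq k] {R : Type*} [CommRing R] [StarRing R] (C : Matrix m k R)

lemma posSemidef_mul_inv_conjTranspose_mul_self_mul_conjTranspose [PartialOrder R]
    [StarOrderedRing R] : (C * (Cᴴ * C)⁻¹ * Cᴴ).PosSemidef :=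
  (posSemidef_conjTranspose_mul_self C).inv.mul_mul_conjTranspose_same C

lemma trace_mul_inv_conjTranspose_mul_self_mul_conjTranspose (hC : IsUnit (Cᴴ * C).det) :
    (C * (Cᴴ * C)⁻¹ * Cᴴ).trace = Fintype.card k := by
  rw [trace_mul_cycle, mul_nonsing_inv _ hC, trace_one]

end Projection

lemma mul_sum_smul_mul {ι R : Type*} [Fintype m] [CommSemiring R] (B : Matrix m m R) (p : ι → R)
    (Z : ι → Matrix m m R) (s : Finset ι) :
    B * (∑ i ∈ s, p i • Z i) * B = ∑ i ∈ s, p i • (B * Z i * B) := by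
  simp only [Matrix.mul_sum, Matrix.sum_mul, Matrix.mul_smul, Matrix.smul_mul]

lemma IsHermitian.iInf_eigenvalues_le_trace_div_card [Fintype m] [DecidableEq m] {𝕜 : Type*}
    [RCLike 𝕜] {M : Matrix m m 𝕜} (hM : M.IsHermitian) :
    ⨅ j, hM.eigenvalues j ≤ RCLike.re M.trace / Fintype.card m := by
  cases isEmpty_or_nonempty m
  · simp
  rw [hM.trace_eq_sum_eigenvalues, ← RCLike.ofReal_sum, RCLike.ofReal_re,
    ← Fintype.expect_eq_sum_div_card]
  exact Finset.le_expect Finset.univ_nonempty fun j _ =>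
    ciInf_le (Set.finite_range _).bddBelow j

end Matrix

section Zmat

variable {n : ℕ} {A W : Matrix (Fin n) (Fin n) ℝ} {q : ℕ} {S : Matrix (Fin n) (Fin q) ℝ}

lemma conjTranspose_sqrt_mul_mul_self (hW : W.PosSemidef) :
    (hW.sqrt * Aᵀ * S)ᴴ * (hW.sqrt * Aᵀ * S) = Sᵀ * A * W * Aᵀ * S := by
  simp only [conjTranspose_eq_transpose_of_trivial, transpose_mul, transpose_transpose,
    hW.sqrt_transpose, Matrix.mul_assoc]
  rw [← Matrix.mul_assoc hW.sqrt hW.sqrt, hW.sqrt_mul_self]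

lemma sqrt_mul_Zmat_mul_sqrt (hW : W.PosSemidef) :
    hW.sqrt * Zmat A W S * hW.sqrt =
      hW.sqrt * Aᵀ * S * ((hW.sqrt * Aᵀ * S)ᴴ * (hW.sqrt * Aᵀ * S))⁻¹ *
        (hW.sqrt * Aᵀ * S)ᴴ := by
  rw [conjTranspose_sqrt_mul_mul_self]
  simp only [Zmat, conjTranspose_eq_transpose_of_trivial, transpose_mul, transpose_transpose,
    hW.sqrt_transpose, Matrix.mul_assoc]

lemma posSemidef_sqrt_mul_Zmat_mul_sqrt (hW : W.PosSemidef) :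
    (hW.sqrt * Zmat A W S * hW.sqrt).PosSemidef := by
  rw [sqrt_mul_Zmat_mul_sqrt]
  exact posSemidef_mul_inv_conjTranspose_mul_self_mul_conjTranspose _

lemma posDef_transpose_mul_mul_mul_transpose_mul (hA : IsUnit A.det) (hW : W.PosDef)
    (hS : S.rank = q) : (Sᵀ * A * W * Aᵀ * S).PosDef := by
  have hAt : Function.Injective Aᵀ.mulVec :=
    mulVec_injective_iff_isUnit.mpr ((isUnit_iff_isUnit_det _).mpr (by rwa [det_transpose]))
  have hAS : Function.Injective (Aᵀ * S).mulVec := by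
    rw [show (Aᵀ * S).mulVec = Aᵀ.mulVec ∘ S.mulVec from
      funext fun v => (mulVec_mulVec v Aᵀ S).symm]
    exact hAt.comp (mulVec_injective_of_rank_eq_card S (by rwa [Fintype.card_fin]))
  simpa [conjTranspose_eq_transpose_of_trivial, Matrix.mul_assoc] using
    hW.conjTranspose_mul_mul_same hAS

lemma trace_sqrt_mul_Zmat_mul_sqrt (hA : IsUnit A.det) (hW : W.PosDef) (hS : S.rank = q) :
    (hW.posSemidef.sqrt * Zmat A W S * hW.posSemidef.sqrt).trace = q := by
  rw [sqrt_mul_Zmat_mul_sqrt, trace_mul_inv_conjTranspose_mul_self_mul_conjTranspose,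
    Fintype.card_fin]
  rw [conjTranspose_sqrt_mul_mul_self, ← isUnit_iff_isUnit_det]
  exact (posDef_transpose_mul_mul_mul_transpose_mul hA hW hS).isUnit

end Zmat

theorem stmt10_general {n r : ℕ} (A W : Matrix (Fin n) (Fin n) ℝ)
    (q : Fin r → ℕ) (S : ∀ i, Matrix (Fin n) (Fin (q i)) ℝ)
    (hA : IsUnit A.det) (hW : W.PosDef) (hS : ∀ i, (S i).rank = q i)
    (p : Fin r → ℝ) (hp : ∀ i, 0 < p i) (hsum : ∑ i, p i = 1)
    (hM : (hW.posSemidef.sqrt * (∑ i, p i • Zmat A W (S i)) *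
      hW.posSemidef.sqrt).IsHermitian) :
    0 ≤ 1 - (∑ i, p i * (q i : ℝ)) / (n : ℝ) ∧
    1 - (∑ i, p i * (q i : ℝ)) / (n : ℝ) ≤ 1 - ⨅ j, hM.eigenvalues j ∧
    1 - ⨅ j, hM.eigenvalues j ≤ 1 := by
  have hM_eq := mul_sum_smul_mul hW.posSemidef.sqrt p (fun i => Zmat A W (S i)) Finset.univ
  have hM_psd : (hW.posSemidef.sqrt * (∑ i, p i • Zmat A W (S i)) *
      hW.posSemidef.sqrt).PosSemidef := by
    rw [hM_eq]
    exact posSemidef_sum _ fun i _ => (posSemidef_sqrt_mul_Zmat_mul_sqrt _).smul (hp i).le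
  have hM_trace : (hW.posSemidef.sqrt * (∑ i, p i • Zmat A W (S i)) *
      hW.posSemidef.sqrt).trace = ∑ i, p i * (q i : ℝ) := by
    simp only [hM_eq, trace_sum, trace_smul, trace_sqrt_mul_Zmat_mul_sqrt hA hW (hS _),
      smul_eq_mul]
  have hq_le : ∑ i, p i * (q i : ℝ) ≤ n := calc
    ∑ i, p i * (q i : ℝ) ≤ ∑ i, p i * (n : ℝ) := by
      gcongr with i
      · exact (hp i).le
      · exact hS i ▸ (S i).rank_le_height
    _ = n := by rw [← Finset.sum_mul, hsum, one_mul]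
  have hinf_le : ⨅ j, hM.eigenvalues j ≤ (∑ i, p i * (q i : ℝ)) / n := by
    simpa [hM_trace] using hM.iInf_eigenvalues_le_trace_div_card
  have hinf_nonneg : 0 ≤ ⨅ j, hM.eigenvalues j := Real.iInf_nonneg hM_psd.eigenvalues_nonneg
  refine ⟨?_, ?_, ?_⟩
  · linarith [div_le_one_of_le₀ hq_le n.cast_nonneg]
  · linarith
  · linarith

theorem stmt10 {n r : ℕ} (hn : 0 < n) (A W : Matrix (Fin n) (Fin n) ℝ)
    (q : Fin r → ℕ) (S : ∀ i, Matrix (Fin n) (Fin (q i)) ℝ)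
    (hA : IsUnit A.det) (hW : W.PosDef) (hS : ∀ i, (S i).rank = q i)
    (p : Fin r → ℝ) (hp : ∀ i, 0 < p i) (hsum : ∑ i, p i = 1)
    (hM : (hW.posSemidef.sqrt * (∑ i, p i • Zmat A W (S i)) *
      hW.posSemidef.sqrt).IsHermitian) :
    0 ≤ 1 - (∑ i, p i * (q i : ℝ)) / (n : ℝ) ∧
    1 - (∑ i, p i * (q i : ℝ)) / (n : ℝ) ≤ 1 - ⨅ j, hM.eigenvalues j ∧
    1 - ⨅ j, hM.eigenvalues j ≤ 1 :=
  stmt10_general A W q S hA hW hS p hp hsum hM
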